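/- Define a sequence of positive integers by m₁ := 1 and m_{j+1} := ∏_{l=1}^{j} (2 m_l⁴ + 1). Then for all j ≠ k, there exist no rational numbers x, y with 2 m_j⁴ + 1 = (x² + y²) · (2 m_k⁴ + 1); that is, the ratio (2 m_j⁴ + 1)/(2 m_k⁴ + 1) is not a sum of two squares of rational numbers. -/

import Mathlib

/-!
Since `m₁ = 1` and every later `m_j` is a product of odd numbers, all `m_j` are odd, so
`a_j := 2 m_j⁴ + 1 ≡ 3 (mod 4)`. Not being a sum of two squares, `a_j` has a prime factor
`p ≡ 3 (mod 4)` of odd multiplicity. For `j < k` we have `a_j ∣ m_k` while `a_k ≡ 1 (mod m_k)`,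
so the `a_j` are pairwise coprime and `p ∤ a_k`. A rational solution would make `a_j a_k` a sum
of two rational squares, and clearing denominators, `a_j a_k d²` a sum of two integer squares,
whose `p`-adic valuation `v_p(a_j) + 2 v_p(d)` is odd.
-/

theorem Nat.exists_mem_primeFactors_odd_padicValNat_of_mod_four_eq_three {n : ℕ}
    (hn : n % 4 = 3) : ∃ q ∈ n.primeFactors, q % 4 = 3 ∧ Odd (padicValNat q n) := by
  by_contra! h
  obtain ⟨x, y, rfl⟩ : ∃ x y, n = x ^ 2 + y ^ 2 :=
    Nat.eq_sq_add_sq_iff.mpr fun q hq hq3 ↦ Nat.not_odd_iff_even.mp (h q hq hq3)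
  have hmod : ((x : ZMod 4) ^ 2 + (y : ZMod 4) ^ 2) = 3 := by
    have := (ZMod.natCast_mod (x ^ 2 + y ^ 2) 4).symm
    rw [hn] at this
    exact_mod_cast this
  have : ∀ a b : ZMod 4, a ^ 2 + b ^ 2 ≠ 3 := by decide
  exact this _ _ hmod

theorem Nat.even_padicValNat_of_cast_eq_sq_add_sq {n : ℕ} {x y : ℚ}
    (h : (n : ℚ) = x ^ 2 + y ^ 2) {q : ℕ} (hq : q ∈ n.primeFactors) (hq3 : q % 4 = 3) :
    Even (padicValNat q n) := by
  have hn : n ≠ 0 := (Nat.mem_primeFactors.mp hq).2.2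
  set d := x.den * y.den
  have hd : d ^ 2 ≠ 0 := pow_ne_zero _ (Nat.mul_ne_zero x.den_nz y.den_nz)
  have hint : ((n * d ^ 2 : ℕ) : ℤ) =
      (x.num * y.den).natAbs ^ 2 + (y.num * x.den).natAbs ^ 2 := by
    rw [Int.natAbs_sq, Int.natAbs_sq]
    have : ((n * d ^ 2 : ℕ) : ℚ) = (x.num * y.den) ^ 2 + (y.num * x.den) ^ 2 := by
      rw [← x.mul_den_eq_num, ← y.mul_den_eq_num]
      push_cast [d, h]
      ring
    exact_mod_cast this
  have hsum : ∃ u v, n * d ^ 2 = u ^ 2 + v ^ 2 := ⟨_, _, by exact_mod_cast hint⟩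
  have : Fact q.Prime := ⟨Nat.prime_of_mem_primeFactors hq⟩
  have heven := Nat.eq_sq_add_sq_iff.mp hsum q
    (Nat.primeFactors_mono (dvd_mul_right _ _) (mul_ne_zero hn hd) hq) hq3
  rw [padicValNat.mul hn hd, padicValNat.pow] at heven
  exact (Nat.even_add.mp heven).mpr (even_two_mul _)

theorem two_mul_pow_four_add_one_mod_four {n : ℕ} (hn : Odd n) : (2 * n ^ 4 + 1) % 4 = 3 := by
  obtain ⟨c, rfl⟩ := hn
  ring_nf
  omega

theorem coprime_two_mul_pow_four_add_one (n : ℕ) : n.Coprime (2 * n ^ 4 + 1) := by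
  rw [show 2 * n ^ 4 + 1 = n * (2 * n ^ 3) + 1 by ring, Nat.coprime_mul_left_add_right]
  exact Nat.coprime_one_right n

theorem odd_of_eq_prod_two_mul_pow_four_add_one {m : ℕ → ℕ} (h1 : m 1 = 1)
    (hrec : ∀ j : ℕ, 1 ≤ j → m (j + 1) = ∏ l ∈ Finset.Icc 1 j, (2 * m l ^ 4 + 1))
    {j : ℕ} (hj : 1 ≤ j) : Odd (m j) := by
  obtain ⟨i, rfl⟩ := Nat.exists_eq_add_of_le' hj
  rcases i with _ | i
  · simp [h1]
  · rw [hrec _ (Nat.le_add_left 1 i)]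
    exact Finset.prod_induction _ Odd (fun _ _ ↦ Odd.mul) odd_one
      fun l _ ↦ odd_two_mul_add_one _

theorem coprime_two_mul_pow_four_add_one_of_eq_prod {m : ℕ → ℕ}
    (hrec : ∀ j : ℕ, 1 ≤ j → m (j + 1) = ∏ l ∈ Finset.Icc 1 j, (2 * m l ^ 4 + 1))
    {j k : ℕ} (hj : 1 ≤ j) (hjk : j < k) :
    (2 * m j ^ 4 + 1).Coprime (2 * m k ^ 4 + 1) := by
  obtain ⟨i, rfl⟩ := Nat.exists_eq_add_of_lt hjk
  have hdvd : 2 * m j ^ 4 + 1 ∣ m (j + i + 1) := by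
    rw [hrec _ (by omega)]
    exact Finset.dvd_prod_of_mem _ (Finset.mem_Icc.mpr ⟨hj, by omega⟩)
  exact (coprime_two_mul_pow_four_add_one _).coprime_dvd_left hdvd

/-- Let `(m_j)_{j ≥ 1}` be the sequence of positive integers defined by
`m₁ = 1` and `m_{j+1} = ∏_{l=1}^{j} (2 m_l⁴ + 1)`. Then for all `j ≠ k` (both ≥ 1), there
are no rationals `x, y` with `2 m_j⁴ + 1 = (x² + y²) · (2 m_k⁴ + 1)`, i.e. the ratio
`(2 m_j⁴ + 1)/(2 m_k⁴ + 1)` is not a sum of two squares of rationals. -/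
theorem ratio_not_sum_two_rat_squares_of_seq (m : ℕ → ℕ)
    (h1 : m 1 = 1)
    (hrec : ∀ j : ℕ, 1 ≤ j → m (j + 1) = ∏ l ∈ Finset.Icc 1 j, (2 * m l ^ 4 + 1)) :
    ∀ j k : ℕ, 1 ≤ j → 1 ≤ k → j ≠ k →
      ¬ ∃ x y : ℚ,
        ((2 * m j ^ 4 + 1 : ℕ) : ℚ) = (x ^ 2 + y ^ 2) * ((2 * m k ^ 4 + 1 : ℕ) : ℚ) := by
  rintro j k hj hk hjk ⟨x, y, h⟩
  obtain ⟨p, hp, hp3, hodd⟩ := Nat.exists_mem_primeFactors_odd_padicValNat_of_mod_four_eq_three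
    (two_mul_pow_four_add_one_mod_four (odd_of_eq_prod_two_mul_pow_four_add_one h1 hrec hj))
  have hcop : (2 * m j ^ 4 + 1).Coprime (2 * m k ^ 4 + 1) := by
    rcases hjk.lt_or_gt with hlt | hgt
    · exact coprime_two_mul_pow_four_add_one_of_eq_prod hrec hj hlt
    · exact (coprime_two_mul_pow_four_add_one_of_eq_prod hrec hk hgt).symm
  have hpk : ¬ p ∣ 2 * m k ^ 4 + 1 := fun hpk ↦ (Nat.prime_of_mem_primeFactors hp).one_lt.ne'
    (Nat.eq_one_of_dvd_coprimes hcop (Nat.dvd_of_mem_primeFactors hp) hpk)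
  have hprod : (((2 * m j ^ 4 + 1) * (2 * m k ^ 4 + 1) : ℕ) : ℚ) =
      (x * (2 * m k ^ 4 + 1 : ℕ)) ^ 2 + (y * (2 * m k ^ 4 + 1 : ℕ)) ^ 2 := by
    rw [Nat.cast_mul, h]
    ring
  have : Fact p.Prime := ⟨Nat.prime_of_mem_primeFactors hp⟩
  have heven := Nat.even_padicValNat_of_cast_eq_sq_add_sq hprod
    (Nat.primeFactors_mono (dvd_mul_right _ _) (by positivity) hp) hp3
  rw [padicValNat.mul (by positivity) (by positivity), padicValNat.eq_zero_of_not_dvd hpk,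
    add_zero] at heven
  exact Nat.not_even_iff_odd.mpr hodd heven
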